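/- With k_max, k_min the extremal eigenvalues of s-column Gram submatrices of A, k_min/k_max ≥ min_{h≠l} c_hh/c_ll − 2(s−1)·max_i ν(i), where ν(i) = max_{j≠i}|c_ij|/c_ii. -/

import Mathlib

open Matrix

theorem Matrix.isHermitian_transpose_mul_self {m n α : Type*} [Fintype m]
    [NonUnitalCommSemiring α] [StarRing α] [TrivialStar α] (A : Matrix m n α) :
    (Aᵀ * A).IsHermitian := by
  rw [IsHermitian, conjTranspose_mul, conjTranspose_eq_transpose_of_trivial,
    conjTranspose_eq_transpose_of_trivial, transpose_transpose]

/-!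
Every off-diagonal entry in row `i` of `C` is at most `ν c_ii` in absolute value, where
`ν = max_i ν(i)`, so by Gershgorin's theorem each eigenvalue of an `s`-column Gram submatrix
`A_Tᵀ A_T` lies within `t c_ii` of some diagonal entry `c_ii`, with `t = (s - 1) ν`. Hence
`k_min ≥ (1 - t) c_hh` and `k_max ≤ (1 + t) c_ll` for some `h, l`, so that
`k_min / k_max ≥ (c_hh / c_ll) (1 - t) / (1 + t) ≥ r (1 - 2t) ≥ r - 2t`, where
`r = min_{h ≠ l} c_hh / c_ll ≤ 1`.
-/

namespace Matrix

variable {ι : Type*} [Fintype ι] [DecidableEq ι]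

theorem IsHermitian.exists_abs_eigenvalues_sub_le {B : Matrix ι ι ℝ} (hB : B.IsHermitian)
    (k : ι) : ∃ p, |hB.eigenvalues k - B p p| ≤ ∑ j ∈ Finset.univ.erase p, |B p j| := by
  have hev : Module.End.HasEigenvalue (toLin' B) (hB.eigenvalues k) := by
    refine Module.End.hasEigenvalue_of_hasEigenvector
      (x := (⇑(hB.eigenvectorBasis k) : ι → ℝ)) ⟨?_, ?_⟩
    · rw [Module.End.mem_eigenspace_iff, toLin'_apply, hB.mulVec_eigenvectorBasis]
    · exact fun h => hB.eigenvectorBasis.orthonormal.ne_zero k (by ext j; exact congrFun h j)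
  obtain ⟨p, hp⟩ := eigenvalue_mem_ball hev
  exact ⟨p, by simpa [Metric.mem_closedBall, Real.dist_eq] using hp⟩

theorem IsHermitian.exists_abs_eigenvalues_sub_le_mul_diag {B : Matrix ι ι ℝ}
    (hB : B.IsHermitian) {ν : ℝ} (hν : ∀ p q, q ≠ p → |B p q| ≤ ν * B p p) (k : ι) :
    ∃ p, |hB.eigenvalues k - B p p| ≤ ((Fintype.card ι : ℝ) - 1) * ν * B p p := by
  obtain ⟨p, hp⟩ := hB.exists_abs_eigenvalues_sub_le k
  refine ⟨p, hp.trans ?_⟩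
  calc ∑ j ∈ Finset.univ.erase p, |B p j|
      ≤ (Finset.univ.erase p).card • (ν * B p p) :=
        Finset.sum_le_card_nsmul _ _ _ fun q hq => hν p q (Finset.ne_of_mem_erase hq)
    _ = ((Fintype.card ι : ℝ) - 1) * ν * B p p := by
        rw [Finset.card_erase_of_mem (Finset.mem_univ p), Finset.card_univ, nsmul_eq_mul,
          Nat.cast_pred (Fintype.card_pos_iff.2 ⟨p⟩)]
        ring

theorem transpose_mul_self_diag_pos {m n : Type*} [Fintype m] {A : Matrix m n ℝ} {i : n}
    (hi : (fun k => A k i) ≠ 0) : 0 < (Aᵀ * A) i i := by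
  rw [mul_apply']
  exact lt_of_le_of_ne (Finset.sum_nonneg fun _ _ => mul_self_nonneg _)
    (Ne.symm (dotProduct_self_eq_zero.not.2 hi))

theorem transpose_mul_self_submatrix {m n o : Type*} [Fintype m] (A : Matrix m n ℝ)
    (f : o → n) : (A.submatrix id f)ᵀ * A.submatrix id f = (Aᵀ * A).submatrix f f := by
  rw [submatrix_mul _ _ f id f Function.bijective_id, transpose_submatrix]

theorem exists_abs_eigenvalues_gram_sub_le {m n : Type*} [Fintype m] [DecidableEq n]
    (A : Matrix m n ℝ) {ν : ℝ} (hν : ∀ i j, j ≠ i → |(Aᵀ * A) i j| ≤ ν * (Aᵀ * A) i i)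
    (T : Finset n) (k : T) :
    ∃ i, |(isHermitian_transpose_mul_self (A.submatrix id (fun i : T => i.1))).eigenvalues k
      - (Aᵀ * A) i i| ≤ ((T.card : ℝ) - 1) * ν * (Aᵀ * A) i i := by
  have hG (p q : T) :
      ((A.submatrix id (fun i : T => i.1))ᵀ * A.submatrix id (fun i : T => i.1)) p q =
        (Aᵀ * A) p q := by
    rw [transpose_mul_self_submatrix]; rfl
  obtain ⟨p, hp⟩ := IsHermitian.exists_abs_eigenvalues_sub_le_mul_diag
    (isHermitian_transpose_mul_self (A.submatrix id (fun i : T => i.1)))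
    (fun p q hqp => by simpa only [hG] using hν p q (Subtype.coe_ne_coe.2 hqp)) k
  exact ⟨p, by simpa only [hG, Fintype.card_coe] using hp⟩

end Matrix

theorem le_div_of_mem_lowerBounds_ratios {ι : Type*} [Nontrivial ι] {d : ι → ℝ}
    (hd : ∀ i, 0 < d i) {r : ℝ} (hr : r ∈ lowerBounds {q | ∃ h l, h ≠ l ∧ q = d h / d l})
    (h l : ι) : r ≤ d h / d l := by
  by_cases hhl : h = l
  · obtain ⟨i, j, hij⟩ := exists_pair_ne ι
    rw [hhl, div_self (hd l).ne']
    rcases le_total (d i) (d j) with hle | hle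
    · exact (hr ⟨i, j, hij, rfl⟩).trans ((div_le_one (hd j)).2 hle)
    · exact (hr ⟨j, i, hij.symm, rfl⟩).trans ((div_le_one (hd i)).2 hle)
  · exact hr ⟨h, l, hhl, rfl⟩

theorem sub_two_mul_le_div_of_abs_sub_le {r t a b x y : ℝ} (ha : 0 < a) (hb : 0 < b)
    (hx : 0 ≤ x) (hy : 0 < y) (hr : r ≤ 1) (hrab : r ≤ a / b)
    (hxa : |x - a| ≤ t * a) (hyb : |y - b| ≤ t * b) : r - 2 * t ≤ x / y := by
  have ht : 0 ≤ t := nonneg_of_mul_nonneg_left ((abs_nonneg _).trans hxa) ha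
  rcases le_or_gt 1 (2 * t) with ht2 | ht2
  · linarith [div_nonneg hx hy.le]
  have hx_lower : a * (1 - t) ≤ x := by linarith [(abs_le.1 hxa).1]
  have hy_upper : y ≤ b * (1 + t) := by linarith [(abs_le.1 hyb).2]
  calc r - 2 * t ≤ r * (1 - 2 * t) := by nlinarith
    _ ≤ a / b * (1 - 2 * t) := by gcongr
    _ ≤ a * (1 - t) / (b * (1 + t)) := by
        rw [div_mul_eq_mul_div, div_le_div_iff₀ hb (by positivity)]
        nlinarith [mul_nonneg (mul_nonneg ha.le hb.le) (sq_nonneg t)]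
    _ ≤ x / y := div_le_div₀ hx hx_lower hy hy_upper

theorem stmt_12_general {n m s : ℕ} (hm : 1 < m) (hs : 1 ≤ s)
    (A : Matrix (Fin n) (Fin m) ℝ)
    (hcols : ∀ i, (fun k => A k i) ≠ 0)
    (C : Matrix (Fin m) (Fin m) ℝ) (hC : C = Aᵀ * A)
    (lmax lmin : Finset (Fin m) → ℝ)
    (hlmax : ∀ T : Finset (Fin m), T.Nonempty →
      IsGreatest (Set.range
        (isHermitian_transpose_mul_self
          (A.submatrix id (fun i : {j // j ∈ T} => i.1))).eigenvalues) (lmax T))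
    (hlmin : ∀ T : Finset (Fin m), T.Nonempty →
      IsLeast (Set.range
        (isHermitian_transpose_mul_self
          (A.submatrix id (fun i : {j // j ∈ T} => i.1))).eigenvalues) (lmin T))
    (kmax kmin : ℝ)
    (hkmax : IsGreatest {r : ℝ | ∃ T : Finset (Fin m), T.card = s ∧ r = lmax T} kmax)
    (hkmin : IsLeast {r : ℝ | ∃ T : Finset (Fin m), T.card = s ∧ r = lmin T} kmin)
    (hkpos : 0 < kmin) (hkk : kmin ≤ kmax)
    (ν : Fin m → ℝ)
    (hν_ub : ∀ i, ∀ j ≠ i, |C i j| / C i i ≤ ν i)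
    (νmax : ℝ) (hνmax : IsGreatest (Set.range ν) νmax)
    (r : ℝ)
    (hr : IsLeast {q : ℝ | ∃ h l : Fin m, h ≠ l ∧ q = C h h / C l l} r) :
    r - 2 * ((s : ℝ) - 1) * νmax ≤ kmin / kmax := by
  subst hC
  have : Nontrivial (Fin m) := Fin.nontrivial_iff_two_le.2 hm
  have hdiag (i : Fin m) : 0 < (Aᵀ * A) i i := transpose_mul_self_diag_pos (hcols i)
  have hoff (i j : Fin m) (hji : j ≠ i) : |(Aᵀ * A) i j| ≤ νmax * (Aᵀ * A) i i :=
    (div_le_iff₀ (hdiag i)).1 ((hν_ub i j hji).trans (hνmax.2 ⟨i, rfl⟩))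
  obtain ⟨T₀, hT₀, rfl⟩ := hkmin.1
  obtain ⟨T₁, hT₁, rfl⟩ := hkmax.1
  obtain ⟨k₀, hk₀⟩ := (hlmin T₀ (Finset.card_pos.1 (by omega))).1
  obtain ⟨k₁, hk₁⟩ := (hlmax T₁ (Finset.card_pos.1 (by omega))).1
  obtain ⟨h, hh⟩ := exists_abs_eigenvalues_gram_sub_le A hoff T₀ k₀
  obtain ⟨l, hl⟩ := exists_abs_eigenvalues_gram_sub_le A hoff T₁ k₁
  rw [hk₀, hT₀] at hh
  rw [hk₁, hT₁] at hl
  have hrdiv := le_div_of_mem_lowerBounds_ratios hdiag hr.2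
  rw [mul_assoc]
  exact sub_two_mul_le_div_of_abs_sub_le (hdiag h) (hdiag l) hkpos.le (hkpos.trans_le hkk)
    (by simpa only [div_self (hdiag l).ne'] using hrdiv l l) (hrdiv h l)
    hh hl

/-- Theorem 2: `k_min / k_max ≥ min_{h≠l} c_hh/c_ll − 2(s−1)·max_i ν(i)`. -/
theorem stmt_12 {n m s : ℕ} (hm : 1 < m) (hs : 1 ≤ s) (hsm : s ≤ m)
    (A : Matrix (Fin n) (Fin m) ℝ)
    (hcols : ∀ i, (fun k => A k i) ≠ 0)
    (C : Matrix (Fin m) (Fin m) ℝ) (hC : C = Aᵀ * A)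
    (lmax lmin : Finset (Fin m) → ℝ)
    (hlmax : ∀ T : Finset (Fin m), T.Nonempty →
      IsGreatest (Set.range
        (isHermitian_transpose_mul_self
          (A.submatrix id (fun i : {j // j ∈ T} => i.1))).eigenvalues) (lmax T))
    (hlmin : ∀ T : Finset (Fin m), T.Nonempty →
      IsLeast (Set.range
        (isHermitian_transpose_mul_self
          (A.submatrix id (fun i : {j // j ∈ T} => i.1))).eigenvalues) (lmin T))
    (kmax kmin : ℝ)
    (hkmax : IsGreatest {r : ℝ | ∃ T : Finset (Fin m), T.card = s ∧ r = lmax T} kmax)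
    (hkmin : IsLeast {r : ℝ | ∃ T : Finset (Fin m), T.card = s ∧ r = lmin T} kmin)
    (hkpos : 0 < kmin) (hkk : kmin ≤ kmax)
    (ν : Fin m → ℝ)
    (hν_ub : ∀ i, ∀ j ≠ i, |C i j| / C i i ≤ ν i)
    (hν_mem : ∀ i, ∃ j ≠ i, ν i = |C i j| / C i i)
    (νmax : ℝ) (hνmax : IsGreatest (Set.range ν) νmax)
    (r : ℝ)
    (hr : IsLeast {q : ℝ | ∃ h l : Fin m, h ≠ l ∧ q = C h h / C l l} r) :
    r - 2 * ((s : ℝ) - 1) * νmax ≤ kmin / kmax :=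
  stmt_12_general hm hs A hcols C hC lmax lmin hlmax hlmin kmax kmin hkmax hkmin hkpos hkk ν hν_ub
    νmax hνmax r hr
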